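/- arXiv:1309.5923 — 3 statements merged into one kernel-verified Lean document; each statement's English description precedes it below -/
import Mathlib

section
/- For any symmetric q×q real matrix Δ and any positive integer s, if |vᵀΔv| ≤ δ for every unit vector v ∈ ℝ^q with at most 2s nonzero coordinates, then for every v ∈ ℝ^q one has |vᵀΔv| ≤ 27δ(‖v‖₂² + (1/s)‖v‖₁²). -/
/-!
Cut `v` into blocks `v = x₀ + x₁ + ⋯` of `s` coordinates each, taking the `s` largest entries
first, then the `s` largest of the rest, and so on. Every entry of `x_{k+1}` is at most the
average `‖x_k‖₁ / s` of the entries of `x_k`, hence `‖x_{k+1}‖₂ ≤ ‖x_k‖₁ / √s` and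
`∑ₖ ‖x_k‖₂ ≤ ‖v‖₂ + ‖v‖₁ / √s`. Two blocks together are `2s`-sparse, so polarization gives
`|x_jᵀ Δ x_k| ≤ δ ‖x_j‖₂ ‖x_k‖₂`, and summing over all pairs of blocks
`|vᵀ Δ v| ≤ δ (∑ₖ ‖x_k‖₂)² ≤ 2δ (‖v‖₂² + ‖v‖₁² / s)`.
-/

open Finset Matrix

theorem Finset.exists_subset_card_eq_forall_le {ι α : Type*} [DecidableEq ι] [LinearOrder α]
    (f : ι → α) {S : Finset ι} {k : ℕ} (hk : k ≤ #S) :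
    ∃ A ⊆ S, #A = k ∧ ∀ i ∈ A, ∀ j ∈ S \ A, f j ≤ f i := by
  induction k with
  | zero => exact ⟨∅, empty_subset _, card_empty, by simp⟩
  | succ k ih =>
    obtain ⟨A, hAS, hA, hle⟩ := ih (by omega)
    have hne : (S \ A).Nonempty := by
      rw [← card_pos, card_sdiff_of_subset hAS]; omega
    obtain ⟨m, hm, hmax⟩ := (S \ A).exists_max_image f hne
    have hmA : m ∉ A := (mem_sdiff.1 hm).2
    refine ⟨insert m A, insert_subset (mem_sdiff.1 hm).1 hAS,
      by rw [card_insert_of_notMem hmA, hA], fun i hi j hj => ?_⟩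
    have hjA : j ∈ S \ A := sdiff_subset_sdiff subset_rfl (subset_insert m A) hj
    rcases mem_insert.1 hi with rfl | hi
    · exact hmax j hjA
    · exact hle i hi j hjA

theorem Matrix.smul_dotProduct_mulVec_smul {n R : Type*} [Fintype n] [CommSemiring R]
    (Δ : Matrix n n R) (a b : R) (x y : n → R) :
    (a • x) ⬝ᵥ Δ *ᵥ (b • y) = a * b * (x ⬝ᵥ Δ *ᵥ y) := by
  simp only [mulVec_smul, smul_dotProduct, dotProduct_smul, smul_eq_mul]
  ring

theorem Matrix.IsSymm.dotProduct_mulVec_comm {n R : Type*} [Fintype n] [CommSemiring R]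
    {Δ : Matrix n n R} (hΔ : Δ.IsSymm) (x y : n → R) : x ⬝ᵥ Δ *ᵥ y = y ⬝ᵥ Δ *ᵥ x := by
  rw [dotProduct_mulVec, ← mulVec_transpose, hΔ.eq, dotProduct_comm]

namespace SparseQuadraticForm

variable {n : Type*} [Fintype n] {s k : ℕ}

noncomputable def supp (x : n → ℝ) : Finset n := {i | x i ≠ 0}

noncomputable def norm2 (x : n → ℝ) : ℝ := √(∑ i, x i ^ 2)

lemma norm2_nonneg (x : n → ℝ) : 0 ≤ norm2 x := Real.sqrt_nonneg _

lemma sq_norm2 (x : n → ℝ) : norm2 x ^ 2 = ∑ i, x i ^ 2 := Real.sq_sqrt (by positivity)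

@[simp] lemma norm2_zero : norm2 (0 : n → ℝ) = 0 := by simp [norm2]

lemma norm2_eq_zero {x : n → ℝ} : norm2 x = 0 ↔ x = 0 := by
  rw [norm2, Real.sqrt_eq_zero (by positivity), sum_eq_zero_iff_of_nonneg (fun i _ => sq_nonneg _)]
  simp [funext_iff]

lemma norm2_smul (c : ℝ) (x : n → ℝ) : norm2 (c • x) = |c| * norm2 x := by
  simp only [norm2, Pi.smul_apply, smul_eq_mul, mul_pow, ← mul_sum]
  rw [Real.sqrt_mul (sq_nonneg _), Real.sqrt_sq_eq_abs]

lemma norm2_inv_smul_self {x : n → ℝ} (hx : x ≠ 0) : norm2 ((norm2 x)⁻¹ • x) = 1 := by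
  rw [norm2_smul, abs_inv, abs_of_nonneg (norm2_nonneg x),
    inv_mul_cancel₀ (norm2_eq_zero.not.2 hx)]

lemma norm2_le_of_abs_le {x y : n → ℝ} (h : ∀ i, |x i| ≤ |y i|) : norm2 x ≤ norm2 y :=
  Real.sqrt_le_sqrt <| sum_le_sum fun i _ => sq_le_sq.2 (h i)

lemma norm2_le_of_card_supp_le {x : n → ℝ} {M : ℝ} (hx : #(supp x) ≤ s)
    (hM : ∀ i, |x i| ≤ M) (hM0 : 0 ≤ M) : norm2 x ≤ √s * M := by
  have : ∑ i, x i ^ 2 ≤ s * M ^ 2 := calc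
    ∑ i, x i ^ 2 = ∑ i ∈ supp x, x i ^ 2 := (sum_subset (subset_univ _) (by simp [supp])).symm
    _ ≤ ∑ i ∈ supp x, M ^ 2 :=
      sum_le_sum fun i _ => sq_le_sq.2 ((hM i).trans_eq (abs_of_nonneg hM0).symm)
    _ ≤ s * M ^ 2 := by rw [sum_const, nsmul_eq_mul]; gcongr
  calc norm2 x ≤ √(s * M ^ 2) := Real.sqrt_le_sqrt this
    _ = √s * M := by rw [Real.sqrt_mul (by positivity), Real.sqrt_sq hM0]

lemma supp_smul {c : ℝ} (hc : c ≠ 0) (x : n → ℝ) : supp (c • x) = supp x := by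
  ext i; simp [supp, hc]

lemma supp_neg (x : n → ℝ) : supp (-x) = supp x := by
  ext i; simp [supp]

lemma card_supp_add_le (x y : n → ℝ) : #(supp (x + y)) ≤ #(supp x) + #(supp y) := by
  classical
  refine (card_le_card fun i => ?_).trans (card_union_le _ _)
  simp only [supp, mem_filter, mem_univ, true_and, mem_union, Pi.add_apply]
  contrapose!
  rintro ⟨hx, hy⟩
  simp [hx, hy]

lemma card_supp_sub_le (x y : n → ℝ) : #(supp (x - y)) ≤ #(supp x) + #(supp y) := by
  simpa only [sub_eq_add_neg, supp_neg] using card_supp_add_le x (-y)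

lemma exists_add_of_card_supp_gt (hs : 0 < s) {y : n → ℝ} (hy : s < #(supp y)) :
    ∃ y₁ y₂ : n → ℝ, y₁ + y₂ = y ∧ #(supp y₁) ≤ s ∧ #(supp y₂) < #(supp y) ∧
      (∀ i, |y₁ i| ≤ |y i|) ∧ (∀ i, |y₂ i| ≤ (∑ j, |y₁ j|) / s) ∧
      ∑ i, |y i| = ∑ i, |y₁ i| + ∑ i, |y₂ i| := by
  classical
  obtain ⟨A, hAS, hA, htop⟩ := exists_subset_card_eq_forall_le (fun i => |y i|) hy.le
  have hA₁ : ∑ j, |if j ∈ A then y j else 0| = ∑ j ∈ A, |y j| := by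
    simp only [apply_ite abs, abs_zero]
    rw [sum_ite_mem, univ_inter]
  refine ⟨fun i => if i ∈ A then y i else 0, fun i => if i ∈ A then 0 else y i,
    funext fun i => by by_cases h : i ∈ A <;> simp [h], ?_, ?_, fun i => ?_, fun i => ?_, ?_⟩
  · refine (card_le_card fun i => ?_).trans hA.le
    by_cases h : i ∈ A <;> simp [supp, h]
  · refine (card_le_card (t := supp y \ A) fun i => ?_).trans_lt ?_
    · by_cases h : i ∈ A <;> simp [supp, h]
    · rw [card_sdiff_of_subset hAS]; omega
  · dsimp only
    split_ifs <;> simp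
  · dsimp only
    rw [hA₁, le_div_iff₀ (by exact_mod_cast hs)]
    split_ifs with h
    · simpa using sum_nonneg fun j _ => abs_nonneg (y j)
    by_cases hy0 : y i = 0
    · simpa [hy0] using sum_nonneg fun j _ => abs_nonneg (y j)
    calc |y i| * s = ∑ _j ∈ A, |y i| := by rw [sum_const, hA, nsmul_eq_mul, mul_comm]
      _ ≤ ∑ j ∈ A, |y j| := sum_le_sum fun j hj => htop j hj i (by simp [supp, h, hy0])
  · rw [← sum_add_distrib]
    exact sum_congr rfl fun i _ => by by_cases h : i ∈ A <;> simp [h]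

lemma exists_sparse_decomposition_of_forall_norm2_le (hs : 0 < s) (y : n → ℝ) (B : ℝ)
    (hB : ∀ z : n → ℝ, #(supp z) ≤ s → (∀ i, |z i| ≤ |y i|) → norm2 z ≤ B) :
    ∃ (m : ℕ) (x : Fin m → n → ℝ), ∑ k, x k = y ∧ (∀ k, #(supp (x k)) ≤ s) ∧
      ∑ k, norm2 (x k) ≤ B + (∑ i, |y i|) / √s := by
  induction hy : #(supp y) using Nat.strong_induction_on generalizing y B with
  | _ N ih =>
  by_cases hys : #(supp y) ≤ s
  · refine ⟨1, fun _ => y, by simp, fun _ => hys, ?_⟩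
    simpa using le_add_of_le_of_nonneg (hB y hys fun _ => le_rfl) (by positivity)
  obtain ⟨y₁, y₂, rfl, h₁, h₂, hdom, hflat, hl1⟩ := exists_add_of_card_supp_gt hs (not_le.1 hys)
  have hB₂ : ∀ z : n → ℝ, #(supp z) ≤ s → (∀ i, |z i| ≤ |y₂ i|) →
      norm2 z ≤ (∑ j, |y₁ j|) / √s := fun z hz hzy => calc
    norm2 z ≤ √s * ((∑ j, |y₁ j|) / s) :=
      norm2_le_of_card_supp_le hz (fun i => (hzy i).trans (hflat i)) (by positivity)
    _ = (∑ j, |y₁ j|) / √s := by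
      have : (0 : ℝ) < s := by exact_mod_cast hs
      field_simp
      rw [Real.sq_sqrt this.le, mul_comm]
  obtain ⟨m, x, hsum, hx, hnorm⟩ := ih _ (hy ▸ h₂) y₂ _ hB₂ rfl
  refine ⟨m + 1, Fin.cons y₁ x, by rw [Fin.sum_cons, hsum], Fin.cases h₁ hx, ?_⟩
  rw [Fin.sum_univ_succ, Fin.cons_zero]
  simp only [Fin.cons_succ]
  rw [hl1, add_div]
  linarith [hB y₁ h₁ hdom]

lemma exists_sparse_decomposition (hs : 0 < s) (v : n → ℝ) :
    ∃ (m : ℕ) (x : Fin m → n → ℝ), ∑ k, x k = v ∧ (∀ k, #(supp (x k)) ≤ s) ∧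
      ∑ k, norm2 (x k) ≤ norm2 v + (∑ i, |v i|) / √s :=
  exists_sparse_decomposition_of_forall_norm2_le hs v _ fun _ _ hz => norm2_le_of_abs_le hz

variable (Δ : Matrix n n ℝ) {δ : ℝ}

lemma nonneg_of_forall_abs_dotProduct_mulVec_le (hk : 0 < k)
    (H : ∀ v : n → ℝ, ∑ i, v i ^ 2 = 1 → #(supp v) ≤ k → |v ⬝ᵥ Δ *ᵥ v| ≤ δ) (i : n) : 0 ≤ δ := by
  classical
  refine (abs_nonneg _).trans (H (Pi.single i 1) (by simp [Pi.single_apply]) ?_)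
  refine (card_le_card (t := {i}) fun j => ?_).trans ((card_singleton i).trans_le hk)
  by_cases h : j = i <;> simp [supp, h]

lemma abs_dotProduct_mulVec_self_le
    (H : ∀ v : n → ℝ, ∑ i, v i ^ 2 = 1 → #(supp v) ≤ k → |v ⬝ᵥ Δ *ᵥ v| ≤ δ)
    {x : n → ℝ} (hx : #(supp x) ≤ k) : |x ⬝ᵥ Δ *ᵥ x| ≤ δ * norm2 x ^ 2 := by
  rcases eq_or_ne x 0 with rfl | hx0
  · simp
  have ha : 0 < norm2 x := (norm2_nonneg x).lt_of_ne' (norm2_eq_zero.not.2 hx0)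
  have hunit : ∑ i, ((norm2 x)⁻¹ • x) i ^ 2 = 1 := by
    rw [← sq_norm2, norm2_inv_smul_self hx0, one_pow]
  have hu := H _ hunit (by rwa [supp_smul (by positivity)])
  calc |x ⬝ᵥ Δ *ᵥ x| = norm2 x ^ 2 * |((norm2 x)⁻¹ • x) ⬝ᵥ Δ *ᵥ ((norm2 x)⁻¹ • x)| := by
        rw [smul_dotProduct_mulVec_smul, abs_mul, abs_mul_self]
        field_simp
    _ ≤ norm2 x ^ 2 * δ := by gcongr
    _ = δ * norm2 x ^ 2 := mul_comm _ _

section Symmetric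

variable {Δ} (hΔ : Δ.IsSymm)
  (hquad : ∀ z : n → ℝ, #(supp z) ≤ 2 * s → |z ⬝ᵥ Δ *ᵥ z| ≤ δ * norm2 z ^ 2)
include hΔ hquad

lemma abs_dotProduct_mulVec_le_of_card_supp_le {x y : n → ℝ} (hx : #(supp x) ≤ s)
    (hy : #(supp y) ≤ s) : |x ⬝ᵥ Δ *ᵥ y| ≤ δ * (norm2 x ^ 2 + norm2 y ^ 2) / 2 := by
  have hpolar : 4 * (x ⬝ᵥ Δ *ᵥ y) = (x + y) ⬝ᵥ Δ *ᵥ (x + y) - (x - y) ⬝ᵥ Δ *ᵥ (x - y) := by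
    simp only [mulVec_add, mulVec_sub, dotProduct_add, dotProduct_sub, add_dotProduct,
      sub_dotProduct, hΔ.dotProduct_mulVec_comm y x]
    ring
  have hparallel :
      norm2 (x + y) ^ 2 + norm2 (x - y) ^ 2 = 2 * (norm2 x ^ 2 + norm2 y ^ 2) := by
    simp only [sq_norm2, Pi.add_apply, Pi.sub_apply, ← sum_add_distrib, mul_sum]
    exact sum_congr rfl fun i _ => by ring
  have hadd := hquad (x + y) ((card_supp_add_le x y).trans (by omega))
  have hsub := hquad (x - y) ((card_supp_sub_le x y).trans (by omega))
  have : 4 * |x ⬝ᵥ Δ *ᵥ y| ≤ 2 * (δ * (norm2 x ^ 2 + norm2 y ^ 2)) := calc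
    4 * |x ⬝ᵥ Δ *ᵥ y| = |(x + y) ⬝ᵥ Δ *ᵥ (x + y) - (x - y) ⬝ᵥ Δ *ᵥ (x - y)| := by
      rw [← hpolar, abs_mul, abs_of_pos (four_pos : (0 : ℝ) < 4)]
    _ ≤ |(x + y) ⬝ᵥ Δ *ᵥ (x + y)| + |(x - y) ⬝ᵥ Δ *ᵥ (x - y)| := abs_sub _ _
    _ ≤ δ * norm2 (x + y) ^ 2 + δ * norm2 (x - y) ^ 2 := add_le_add hadd hsub
    _ = 2 * (δ * (norm2 x ^ 2 + norm2 y ^ 2)) := by rw [← mul_add, hparallel]; ring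
  linarith

lemma abs_dotProduct_mulVec_le_mul_norm2 {x y : n → ℝ} (hx : #(supp x) ≤ s)
    (hy : #(supp y) ≤ s) : |x ⬝ᵥ Δ *ᵥ y| ≤ δ * norm2 x * norm2 y := by
  rcases eq_or_ne x 0 with rfl | hx0
  · simp
  rcases eq_or_ne y 0 with rfl | hy0
  · simp
  have ha : 0 < norm2 x := (norm2_nonneg x).lt_of_ne' (norm2_eq_zero.not.2 hx0)
  have hb : 0 < norm2 y := (norm2_nonneg y).lt_of_ne' (norm2_eq_zero.not.2 hy0)
  have h := abs_dotProduct_mulVec_le_of_card_supp_le hΔ hquad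
    (x := (norm2 x)⁻¹ • x) (y := (norm2 y)⁻¹ • y) (by rwa [supp_smul (by positivity)])
    (by rwa [supp_smul (by positivity)])
  rw [norm2_inv_smul_self hx0, norm2_inv_smul_self hy0] at h
  calc |x ⬝ᵥ Δ *ᵥ y|
      = norm2 x * norm2 y * |((norm2 x)⁻¹ • x) ⬝ᵥ Δ *ᵥ ((norm2 y)⁻¹ • y)| := by
        rw [smul_dotProduct_mulVec_smul, abs_mul, abs_mul, abs_inv, abs_inv, abs_of_pos ha,
          abs_of_pos hb]
        field_simp
    _ ≤ norm2 x * norm2 y * δ := by gcongr; linarith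
    _ = δ * norm2 x * norm2 y := by ring

lemma abs_sum_dotProduct_mulVec_sum_le {ι : Type*} [Fintype ι] (x : ι → n → ℝ)
    (hx : ∀ k, #(supp (x k)) ≤ s) :
    |(∑ k, x k) ⬝ᵥ Δ *ᵥ ∑ k, x k| ≤ δ * (∑ k, norm2 (x k)) ^ 2 := calc
  |(∑ k, x k) ⬝ᵥ Δ *ᵥ ∑ k, x k| = |∑ j, ∑ k, x j ⬝ᵥ Δ *ᵥ x k| := by
    rw [mulVec_sum, dotProduct_sum, sum_comm]
    simp only [sum_dotProduct]
  _ ≤ ∑ j, ∑ k, |x j ⬝ᵥ Δ *ᵥ x k| :=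
    (abs_sum_le_sum_abs _ _).trans (sum_le_sum fun j _ => abs_sum_le_sum_abs _ _)
  _ ≤ ∑ j, ∑ k, δ * norm2 (x j) * norm2 (x k) := by
    gcongr with j _ k _
    exact abs_dotProduct_mulVec_le_mul_norm2 hΔ hquad (hx j) (hx k)
  _ = δ * (∑ k, norm2 (x k)) ^ 2 := by
    rw [sq, sum_mul_sum, mul_sum]
    simp only [mul_sum, mul_assoc]

end Symmetric

end SparseQuadraticForm

open SparseQuadraticForm in
/-- Extension lemma: if a symmetric matrix is controlled on `2s`-sparse unit vectors,
it is controlled on all vectors (Loh–Wainwright). -/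
theorem sparse_quadratic_form_extension {q : ℕ} (Δ : Matrix (Fin q) (Fin q) ℝ)
    (hΔ : Δ.IsSymm) (s : ℕ) (hs : 0 < s) (δ : ℝ)
    (hsparse : ∀ v : Fin q → ℝ, (∑ i, v i ^ 2 = 1) →
      ((Finset.univ.filter (fun i => v i ≠ 0)).card ≤ 2 * s) →
      |v ⬝ᵥ Δ.mulVec v| ≤ δ) :
    ∀ v : Fin q → ℝ,
      |v ⬝ᵥ Δ.mulVec v| ≤ 27 * δ * ((∑ i, v i ^ 2) + (1 / (s : ℝ)) * (∑ i, |v i|) ^ 2) := by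
  intro v
  obtain hq | ⟨⟨i⟩⟩ := isEmpty_or_nonempty (Fin q)
  · simp [Subsingleton.elim v 0]
  have hδ : 0 ≤ δ := nonneg_of_forall_abs_dotProduct_mulVec_le Δ (by omega) hsparse i
  obtain ⟨m, x, hx, hxs, hnorm⟩ := exists_sparse_decomposition hs v
  calc |v ⬝ᵥ Δ *ᵥ v| ≤ δ * (∑ k, norm2 (x k)) ^ 2 :=
        hx ▸ abs_sum_dotProduct_mulVec_sum_le hΔ
          (fun _ => abs_dotProduct_mulVec_self_le Δ hsparse) x hxs
    _ ≤ δ * (norm2 v + (∑ i, |v i|) / √s) ^ 2 := by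
        gcongr
        exact sum_nonneg fun k _ => norm2_nonneg _
    _ ≤ δ * (2 * (norm2 v ^ 2 + ((∑ i, |v i|) / √s) ^ 2)) := by gcongr; exact add_sq_le
    _ = 2 * δ * ((∑ i, v i ^ 2) + (1 / (s : ℝ)) * (∑ i, |v i|) ^ 2) := by
        rw [sq_norm2, div_pow, Real.sq_sqrt (Nat.cast_nonneg s)]
        ring
    _ ≤ 27 * δ * ((∑ i, v i ^ 2) + (1 / (s : ℝ)) * (∑ i, |v i|) ^ 2) := by gcongr; norm_num
end

section
/- Let T_n follow a t-distribution with n degrees of freedom. Then for every t > 0, P(T_n² > n(e^{2t²/(n−1)} − 1)) ≤ (1 + ε_n) e^{−t²}/(π^{1/2} t), where ε_n → 0 as n → ∞ and ε_n depends only on n. -/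
open MeasureTheory ProbabilityTheory Real Filter Set

/-!
Given `χ²_n = x > 0`, the event is `|Z| > √(a x)` with `a = e^{2t²/(n-1)} - 1`, and the Mills
ratio bounds its probability by `√(2/π) e^{-ax/2} / √(ax)`. Against the `χ²_n = Gamma(n/2, 1/2)`
density the factor `x^{-1/2} e^{-ax/2}` turns the density into a multiple of the
`Gamma((n-1)/2, (1+a)/2)` density, so the probability is at most
`Γ((n-1)/2) / Γ(n/2) · e^{-t²} / √(π a)`, and `a ≥ 2t²/(n-1)` gives the bound with
`1 + ε_n = √((n-1)/2) Γ((n-1)/2) / Γ(n/2)`. Log-convexity of `Γ` yields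
`√(x - 1/2) Γ(x) ≤ Γ(x + 1/2) ≤ √x Γ(x)`, whence `ε_n → 0`.
-/

namespace Real

theorem Gamma_add_half_le_sqrt_mul_Gamma {x : ℝ} (hx : 0 < x) :
    Gamma (x + 1 / 2) ≤ √x * Gamma x := by
  have hconv := Gamma_mul_add_mul_le_rpow_Gamma_mul_rpow_Gamma hx (by linarith : 0 < x + 1)
    one_half_pos one_half_pos (add_halves 1)
  rw [Gamma_add_one hx.ne', ← mul_rpow (Gamma_pos_of_pos hx).le (by positivity)] at hconv
  calc Gamma (x + 1 / 2) = Gamma (1 / 2 * x + 1 / 2 * (x + 1)) := by ring_nf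
    _ ≤ (Gamma x * (x * Gamma x)) ^ (1 / 2 : ℝ) := hconv
    _ = √x * Gamma x := by
      rw [← sqrt_eq_rpow, show Gamma x * (x * Gamma x) = x * Gamma x ^ 2 by ring,
        sqrt_mul hx.le, sqrt_sq (Gamma_pos_of_pos hx).le]

theorem sqrt_sub_half_mul_Gamma_le_Gamma_add_half {x : ℝ} (hx : 1 / 2 < x) :
    √(x - 1 / 2) * Gamma x ≤ Gamma (x + 1 / 2) := by
  have hy : 0 < x - 1 / 2 := by linarith
  have hle := Gamma_add_half_le_sqrt_mul_Gamma hy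
  rw [sub_add_cancel] at hle
  calc √(x - 1 / 2) * Gamma x ≤ √(x - 1 / 2) * (√(x - 1 / 2) * Gamma (x - 1 / 2)) := by
        gcongr
    _ = (x - 1 / 2) * Gamma (x - 1 / 2) := by rw [← mul_assoc, mul_self_sqrt hy.le]
    _ = Gamma (x + 1 / 2) := by rw [← Gamma_add_one hy.ne']; ring_nf

theorem tendsto_sqrt_mul_Gamma_div_Gamma_add_half :
    Tendsto (fun x => √x * Gamma x / Gamma (x + 1 / 2)) atTop (nhds 1) := by
  have hfrac : Tendsto (fun x : ℝ => x / (x - 1 / 2)) atTop (nhds 1) := by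
    have hlim : Tendsto (fun x : ℝ => (1 - 1 / 2 * x⁻¹)⁻¹) atTop (nhds (1 - 1 / 2 * 0)⁻¹) :=
      ((tendsto_inv_atTop_zero.const_mul _).const_sub 1).inv₀ (by norm_num)
    rw [show (1 - 1 / 2 * 0 : ℝ)⁻¹ = 1 by norm_num] at hlim
    refine hlim.congr' ?_
    filter_upwards [eventually_gt_atTop 1] with x hx
    field_simp
  have hupper : Tendsto (fun x : ℝ => √(x / (x - 1 / 2))) atTop (nhds 1) :=
    by simpa only [sqrt_one] using hfrac.sqrt
  refine tendsto_of_tendsto_of_tendsto_of_le_of_le' tendsto_const_nhds hupper ?_ ?_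
  · filter_upwards [eventually_gt_atTop 0] with x hx
    rw [one_le_div (Gamma_pos_of_pos (by linarith))]
    exact Gamma_add_half_le_sqrt_mul_Gamma hx
  · filter_upwards [eventually_gt_atTop (1 / 2)] with x hx
    have hy : 0 < x - 1 / 2 := by linarith
    rw [div_le_iff₀ (Gamma_pos_of_pos (by linarith)), sqrt_div' _ hy.le, div_mul_eq_mul_div,
      le_div_iff₀ (sqrt_pos.2 hy), mul_assoc, mul_comm (Gamma x)]
    gcongr
    exact sqrt_sub_half_mul_Gamma_le_Gamma_add_half hx

end Real

theorem integrable_mul_exp_neg_sq_div_two : Integrable (fun z : ℝ => z * exp (-z ^ 2 / 2)) := by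
  simpa [neg_div, div_eq_inv_mul] using
    integrable_mul_exp_neg_mul_sq (by norm_num : (0 : ℝ) < 1 / 2)

theorem integral_Ioi_mul_exp_neg_sq_div_two (u : ℝ) :
    ∫ z in Ioi u, z * exp (-z ^ 2 / 2) = exp (-u ^ 2 / 2) := by
  have hderiv : ∀ z ∈ Ici u,
      HasDerivAt (fun z => -exp (-z ^ 2 / 2)) (z * exp (-z ^ 2 / 2)) z := by
    intro z _
    have hexponent : HasDerivAt (fun z : ℝ => -z ^ 2 / 2) (-z) z :=
      ((hasDerivAt_pow 2 z).neg.div_const 2).congr_deriv (by push_cast; ring)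
    exact hexponent.exp.neg.congr_deriv (by ring)
  have hlim : Tendsto (fun z => -exp (-z ^ 2 / 2)) atTop (nhds (-0)) := by
    simpa only [neg_div, Function.comp_def] using (tendsto_exp_atBot.comp
      (tendsto_neg_atTop_atBot.comp ((tendsto_pow_atTop two_ne_zero).atTop_div_const two_pos))).neg
  rw [integral_Ioi_of_hasDerivAt_of_tendsto' hderiv
    integrable_mul_exp_neg_sq_div_two.integrableOn hlim]
  ring

theorem gaussianReal_Ioi_le {u : ℝ} (hu : 0 < u) :
    gaussianReal 0 1 (Ioi u) ≤ ENNReal.ofReal (gaussianPDFReal 0 1 u / u) := by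
  set c := (√(2 * π))⁻¹
  have hpdf : ∀ z, gaussianPDFReal 0 1 z = c * exp (-z ^ 2 / 2) := by
    simp [gaussianPDFReal, c]
  rw [gaussianReal_apply_eq_integral _ one_ne_zero]
  gcongr
  calc ∫ z in Ioi u, gaussianPDFReal 0 1 z
      ≤ ∫ z in Ioi u, c / u * (z * exp (-z ^ 2 / 2)) := by
        refine setIntegral_mono_on (integrable_gaussianPDFReal 0 1).integrableOn
          (integrable_mul_exp_neg_sq_div_two.const_mul _).integrableOn
          measurableSet_Ioi fun z (hz : u < z) => ?_
        rw [hpdf, div_mul_eq_mul_div, le_div_iff₀ hu]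
        calc c * exp (-z ^ 2 / 2) * u ≤ c * exp (-z ^ 2 / 2) * z := by gcongr
          _ = c * (z * exp (-z ^ 2 / 2)) := by ring
    _ = gaussianPDFReal 0 1 u / u := by
        rw [integral_const_mul, integral_Ioi_mul_exp_neg_sq_div_two, hpdf]
        ring

theorem gaussianReal_lt_abs_le {u : ℝ} (hu : 0 < u) :
    gaussianReal 0 1 {z | u < |z|} ≤ ENNReal.ofReal (√(2 / π) * exp (-u ^ 2 / 2) / u) := by
  have hsymm : gaussianReal 0 1 (Iio (-u)) = gaussianReal 0 1 (Ioi u) := by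
    conv_lhs => rw [← neg_zero, ← gaussianReal_map_neg]
    rw [Measure.map_apply measurable_neg measurableSet_Iio]
    congr 1
    ext z
    simp
  have hsplit : {z : ℝ | u < |z|} = Iio (-u) ∪ Ioi u := by
    ext z
    simp only [mem_ofPred_eq, lt_abs, mem_union, mem_Iio, mem_Ioi, lt_neg]
    tauto
  have hconst : 2 * (√(2 * π))⁻¹ = √(2 / π) := by
    rw [sqrt_div' _ pi_pos.le, sqrt_mul' _ pi_pos.le]
    have := mul_self_sqrt (zero_le_two (α := ℝ))
    field_simp
    linarith
  calc gaussianReal 0 1 {z | u < |z|}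
      ≤ gaussianReal 0 1 (Iio (-u)) + gaussianReal 0 1 (Ioi u) := hsplit ▸ measure_union_le _ _
    _ ≤ ENNReal.ofReal (gaussianPDFReal 0 1 u / u) +
          ENNReal.ofReal (gaussianPDFReal 0 1 u / u) := by
        rw [hsymm]
        gcongr <;> exact gaussianReal_Ioi_le hu
    _ = ENNReal.ofReal (√(2 / π) * exp (-u ^ 2 / 2) / u) := by
        have hbound := div_nonneg (gaussianPDFReal_nonneg 0 1 u) hu.le
        rw [← ENNReal.ofReal_add hbound hbound, ← hconst]
        simp only [gaussianPDFReal, NNReal.coe_one, sub_zero, mul_one]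
        ring_nf

theorem measure_pos_mul_lt_sq_le {Ω : Type*} [MeasurableSpace Ω] {μ : Measure Ω}
    [IsFiniteMeasure μ] {Z X : Ω → ℝ} (hZ : μ.map Z = gaussianReal 0 1)
    (hX : AEMeasurable X μ) (hZX : IndepFun Z X μ) {a : ℝ} (ha : 0 < a) :
    μ {ω | 0 < X ω ∧ a * X ω < Z ω ^ 2} ≤
      ENNReal.ofReal (√(2 / π) / √a) *
        ∫⁻ x in Ioi 0, ENNReal.ofReal ((√x)⁻¹ * exp (-(a / 2 * x))) ∂(μ.map X) := by
  have hZm : AEMeasurable Z μ := .of_map_ne_zero (hZ ▸ IsProbabilityMeasure.ne_zero _)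
  set S := {p : ℝ × ℝ | 0 < p.1 ∧ a * p.1 < p.2 ^ 2}
  have hS : MeasurableSet S :=
    (measurableSet_lt measurable_const measurable_fst).inter
      (measurableSet_lt (measurable_const.mul measurable_fst) (measurable_snd.pow_const 2))
  have hsection : ∀ x, gaussianReal 0 1 (Prod.mk x ⁻¹' S) ≤
      (Ioi 0).indicator (fun x => ENNReal.ofReal (√(2 / π) / √a) *
        ENNReal.ofReal ((√x)⁻¹ * exp (-(a / 2 * x)))) x := by
    intro x
    by_cases hx : 0 < x
    · have hax : 0 < a * x := mul_pos ha hx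
      have hpre : Prod.mk x ⁻¹' S = {z | √(a * x) < |z|} := by
        ext z
        simp only [S, mem_preimage, mem_ofPred_eq, hx, true_and, ← sqrt_sq_eq_abs,
          sqrt_lt_sqrt_iff hax.le]
      rw [indicator_of_mem (show x ∈ Ioi 0 from hx), hpre, ← ENNReal.ofReal_mul (by positivity)]
      refine (gaussianReal_lt_abs_le (sqrt_pos.2 hax)).trans_eq (congrArg _ ?_)
      rw [sq_sqrt hax.le, sqrt_mul ha.le]
      field_simp
    · have hpre : Prod.mk x ⁻¹' S = ∅ := by
        ext z
        simp [S, hx]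
      simp [hpre]
  calc μ {ω | 0 < X ω ∧ a * X ω < Z ω ^ 2} = ((μ.map X).prod (μ.map Z)) S := by
        rw [← (indepFun_iff_map_prod_eq_prod_map_map hX hZm).1 hZX.symm,
          Measure.map_apply_of_aemeasurable (hX.prodMk hZm) hS]
        rfl
    _ ≤ _ := by
        rw [Measure.prod_apply hS, ← lintegral_const_mul, ← lintegral_indicator measurableSet_Ioi,
          hZ]
        · exact lintegral_mono hsection
        · fun_prop

theorem setLIntegral_Ioi_gammaMeasure_inv_sqrt_mul_exp_le {s r b : ℝ} (hs : 0 < s)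
    (hr : 0 < r) (hrb : 0 < r + b) :
    ∫⁻ x in Ioi 0, ENNReal.ofReal ((√x)⁻¹ * exp (-(b * x))) ∂gammaMeasure (s + 1 / 2) r ≤
      ENNReal.ofReal (r ^ (s + 1 / 2) / (r + b) ^ s * (Gamma s / Gamma (s + 1 / 2))) := by
  set C := r ^ (s + 1 / 2) / (r + b) ^ s * (Gamma s / Gamma (s + 1 / 2))
  have hdensity : ∀ x ∈ Ioi (0 : ℝ),
      (gammaPDF (s + 1 / 2) r * fun x => ENNReal.ofReal ((√x)⁻¹ * exp (-(b * x)))) x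
        = ENNReal.ofReal C * gammaPDF s (r + b) x := by
    intro x (hx : 0 < x)
    rw [Pi.mul_apply, gammaPDF_of_nonneg hx.le, gammaPDF_of_nonneg hx.le,
      ← ENNReal.ofReal_mul (by positivity), ← ENNReal.ofReal_mul (by positivity)]
    congr 1
    have hpow : x ^ (s + 1 / 2 - 1) = x ^ (s - 1) * √x := by
      rw [sqrt_eq_rpow, ← rpow_add hx]
      ring_nf
    have hexp : exp (-(r * x)) * exp (-(b * x)) = exp (-((r + b) * x)) := by
      rw [← exp_add]
      ring_nf
    have hΓs := Gamma_pos_of_pos hs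
    have hΓs' := Gamma_pos_of_pos (by linarith : 0 < s + 1 / 2)
    have hsqrt_x := sqrt_pos.2 hx
    rw [hpow, ← hexp]
    simp only [C]
    field_simp
  have hpdf : ∀ s r, Measurable (gammaPDF s r) := fun s r =>
    (measurable_gammaPDFReal s r).ennreal_ofReal
  rw [gammaMeasure, setLIntegral_withDensity_eq_setLIntegral_mul _ (hpdf _ _) (by fun_prop)
    measurableSet_Ioi, setLIntegral_congr_fun measurableSet_Ioi hdensity]
  calc ∫⁻ x in Ioi 0, ENNReal.ofReal C * gammaPDF s (r + b) x
      ≤ ∫⁻ x, ENNReal.ofReal C * gammaPDF s (r + b) x := setLIntegral_le_lintegral _ _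
    _ = ENNReal.ofReal C := by
        rw [lintegral_const_mul _ (hpdf _ _), lintegral_gammaPDF_eq_one hs hrb, mul_one]

theorem mul_lt_div_sqrt_div_sq_iff {n a x z : ℝ} (hn : 0 < n) (ha : 0 ≤ a) :
    n * a < (z / √(x / n)) ^ 2 ↔ 0 < x ∧ a * x < z ^ 2 := by
  by_cases hx : 0 < x
  · have hxn : 0 < x / n := div_pos hx hn
    rw [div_pow, sq_sqrt hxn.le, lt_div_iff₀ hxn, mul_div_assoc', mul_div_right_comm,
      mul_div_cancel_left₀ _ hn.ne']
    exact (and_iff_right hx).symm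
  · -- junk values: `√(x / n) = 0` and then `z / 0 = 0`
    rw [sqrt_eq_zero'.2 (div_nonpos_of_nonpos_of_nonneg (not_lt.1 hx) hn.le)]
    simp [hx, mul_nonneg hn.le ha]

theorem studentT_tail_const_le {m t a : ℝ} (hm : 0 < m) (ht : 0 < t)
    (ha : 1 + a = exp (t ^ 2 / m)) :
    √(2 / π) / √a *
        ((1 / 2) ^ (m + 1 / 2) / (1 / 2 + a / 2) ^ m * (Gamma m / Gamma (m + 1 / 2)))
      ≤ √m * Gamma m / Gamma (m + 1 / 2) * exp (-t ^ 2) / (√π * t) := by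
  have hta : t ^ 2 / m ≤ a := by linarith [add_one_le_exp (t ^ 2 / m)]
  have ha0 : 0 < a := (by positivity : 0 < t ^ 2 / m).trans_le hta
  have hsqrt_a : t / √m ≤ √a := by
    rw [← sqrt_sq ht.le, ← sqrt_div' _ hm.le]
    exact sqrt_le_sqrt hta
  have hpow : (1 / 2 : ℝ) ^ (m + 1 / 2) / (1 / 2 + a / 2) ^ m = √(1 / 2) * exp (-t ^ 2) := by
    rw [rpow_add one_half_pos, show 1 / 2 + a / 2 = 1 / 2 * (1 + a) by ring,
      mul_rpow one_half_pos.le (by linarith), ha, ← exp_mul, div_mul_cancel₀ _ hm.ne',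
      sqrt_eq_rpow, exp_neg]
    have hhalf_pow := rpow_pos_of_pos one_half_pos m
    field_simp
  have hconst : √(2 / π) * √(1 / 2) = (√π)⁻¹ := by
    rw [← sqrt_mul (by positivity), ← sqrt_inv]
    ring_nf
  have hG := Gamma_pos_of_pos hm
  have hG' := Gamma_pos_of_pos (by linarith : 0 < m + 1 / 2)
  have hm' := sqrt_pos.2 hm
  calc _ = Gamma m / Gamma (m + 1 / 2) * exp (-t ^ 2) * (√π)⁻¹ / √a := by
        rw [hpow, ← hconst]
        ring
    _ ≤ Gamma m / Gamma (m + 1 / 2) * exp (-t ^ 2) * (√π)⁻¹ / (t / √m) := by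
        gcongr
    _ = √m * Gamma m / Gamma (m + 1 / 2) * exp (-t ^ 2) / (√π * t) := by
        field_simp

theorem toReal_measure_pos_mul_lt_sq_le {Ω : Type*} [MeasurableSpace Ω] {μ : Measure Ω}
    [IsFiniteMeasure μ] {Z X : Ω → ℝ} {m t a : ℝ} (hm : 0 < m) (ht : 0 < t)
    (hZ : μ.map Z = gaussianReal 0 1) (hX : μ.map X = gammaMeasure (m + 1 / 2) (1 / 2))
    (hZX : IndepFun Z X μ) (ha : 1 + a = exp (t ^ 2 / m)) :
    (μ {ω | 0 < X ω ∧ a * X ω < Z ω ^ 2}).toReal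
      ≤ √m * Gamma m / Gamma (m + 1 / 2) * exp (-t ^ 2) / (√π * t) := by
  have ha0 : 0 < a := by
    have hpos : 0 < t ^ 2 / m := by positivity
    linarith [add_one_lt_exp hpos.ne']
  have := isProbabilityMeasure_gammaMeasure (by positivity : 0 < m + 1 / 2) one_half_pos
  have hXm : AEMeasurable X μ := .of_map_ne_zero (hX ▸ IsProbabilityMeasure.ne_zero _)
  refine ENNReal.toReal_le_of_le_ofReal (by positivity) ?_
  calc μ {ω | 0 < X ω ∧ a * X ω < Z ω ^ 2}
      ≤ ENNReal.ofReal (√(2 / π) / √a) * ENNReal.ofReal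
          ((1 / 2) ^ (m + 1 / 2) / (1 / 2 + a / 2) ^ m * (Gamma m / Gamma (m + 1 / 2))) := by
        refine (measure_pos_mul_lt_sq_le hZ hXm hZX ha0).trans ?_
        rw [hX]
        gcongr
        exact setLIntegral_Ioi_gammaMeasure_inv_sqrt_mul_exp_le hm one_half_pos (by positivity)
    _ ≤ _ := by
        rw [← ENNReal.ofReal_mul (by positivity)]
        exact ENNReal.ofReal_le_ofReal (studentT_tail_const_le hm ht ha)

/-- Tail bound for the Student t-distribution (Sun–Zhang): if `T_n = Z/√(χ²_n/n)`
with `Z ~ N(0,1)` independent of a chi-squared variable with `n` degrees of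
freedom (a Gamma(n/2, 1/2) variable), then
`P(T_n² > n(e^{2t²/(n−1)} − 1)) ≤ (1+ε_n) e^{−t²}/(√π t)` where `ε_n → 0`. -/
theorem studentT_square_tail_bound :
    ∃ ε : ℕ → ℝ, Tendsto ε atTop (nhds 0) ∧
      ∀ (n : ℕ), 2 ≤ n →
      ∀ (Ω : Type) (_ : MeasurableSpace Ω) (μ : Measure Ω), IsProbabilityMeasure μ →
      ∀ Z X : Ω → ℝ,
      Measure.map Z μ = gaussianReal 0 1 →
      Measure.map X μ = gammaMeasure ((n : ℝ) / 2) (1 / 2) →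
      IndepFun Z X μ →
      ∀ t : ℝ, 0 < t →
      (μ {ω | (n : ℝ) * (Real.exp (2 * t ^ 2 / ((n : ℝ) - 1)) - 1)
            < (Z ω / Real.sqrt (X ω / n)) ^ 2}).toReal
        ≤ (1 + ε n) * Real.exp (-t ^ 2) / (Real.sqrt π * t) := by
  refine ⟨fun n => √(((n : ℝ) - 1) / 2) * Gamma (((n : ℝ) - 1) / 2) /
    Gamma (((n : ℝ) - 1) / 2 + 1 / 2) - 1, ?_, ?_⟩
  · have hm : Tendsto (fun n : ℕ => ((n : ℝ) - 1) / 2) atTop atTop :=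
      (tendsto_atTop_add_const_right _ _ tendsto_natCast_atTop_atTop).atTop_div_const two_pos
    simpa using (tendsto_sqrt_mul_Gamma_div_Gamma_add_half.comp hm).sub_const 1
  intro n hn Ω _ μ _ Z X hZ hX hZX t ht
  have hn' : (2 : ℝ) ≤ n := by exact_mod_cast hn
  set m : ℝ := ((n : ℝ) - 1) / 2
  have hm : 0 < m := div_pos (by linarith) two_pos
  set a := exp (2 * t ^ 2 / ((n : ℝ) - 1)) - 1
  have ha : 1 + a = exp (t ^ 2 / m) := by
    simp only [a, m]
    field_simp
    ring_nf
  have ha0 : 0 ≤ a := by linarith [one_le_exp (by positivity : 0 ≤ t ^ 2 / m)]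
  have hevent : {ω | (n : ℝ) * a < (Z ω / √(X ω / n)) ^ 2} =
      {ω | 0 < X ω ∧ a * X ω < Z ω ^ 2} := by
    ext ω
    exact mul_lt_div_sqrt_div_sq_iff (by positivity) ha0
  rw [hevent, add_sub_cancel]
  refine toReal_measure_pos_mul_lt_sq_le hm ht hZ ?_ hZX ha
  rw [hX]
  congr 1
  ring
end

section
/- Let W be an n×p₀ matrix whose gram matrix WᵀW/n satisfies the lower-RE condition μᵀ(WᵀW/n)μ ≥ α₁‖μ‖₂² − ζ‖μ‖₁² for all μ ∈ ℝ^{p₀}. Suppose Δ ∈ ℝ^{p₀} satisfies the cone condition ‖Δ_{T^c}‖₁ ≤ max{2(1+ξ)c₀, 2ξ‖Δ_T‖₁} for constants ξ > 1, c₀ ≥ 0 and index set T with |T| ≤ m. If mζ·8(1+ξ)² ≤ α₁/2 and ζ·8(1+ξ)²c₀² ≤ λ²s² for given λ, s > 0 with c₀ ≤ λ s, then Δᵀ(WᵀW/n)Δ ≥ (α₁/2)‖Δ‖₂² − λ²s·(ζ 8(1+ξ)² s). -/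
set_option maxHeartbeats 1000000


open Finset Matrix

/-- Under the lower-RE condition and the cone condition, the quadratic form of the
gram matrix at the lasso error is bounded below by the restricted curvature. -/
theorem lowerRE_quadratic_lower_bound {n p₀ : ℕ} (W : Matrix (Fin n) (Fin p₀) ℝ)
    (Δ : Fin p₀ → ℝ) (T : Finset (Fin p₀)) (ξ c₀ α₁ ζ lam s : ℝ) (m : ℕ)
    (hξ : 1 < ξ) (hc₀ : 0 ≤ c₀) (hα₁ : 0 < α₁) (hζ : 0 < ζ) (hlam : 0 < lam) (hs : 0 < s)
    (hRE : ∀ μ : Fin p₀ → ℝ,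
      α₁ * (∑ j, μ j ^ 2) - ζ * (∑ j, |μ j|) ^ 2 ≤ (μ ⬝ᵥ (Wᵀ * W).mulVec μ) / n)
    (hcone : ∑ j ∈ Tᶜ, |Δ j| ≤
      max (2 * (1 + ξ) * c₀) (2 * ξ * ∑ j ∈ T, |Δ j|))
    (hT : T.card ≤ m)
    (hmζ : (m : ℝ) * ζ * 8 * (1 + ξ) ^ 2 ≤ α₁ / 2)
    (hζc : ζ * 8 * (1 + ξ) ^ 2 * c₀ ^ 2 ≤ lam ^ 2 * s ^ 2)
    (hc₀lam : c₀ ≤ lam * s) :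
    (α₁ / 2) * (∑ j, Δ j ^ 2) - lam ^ 2 * s * (ζ * 8 * (1 + ξ) ^ 2 * s)
      ≤ (Δ ⬝ᵥ (Wᵀ * W).mulVec Δ) / n := by
  have hRE' := hRE Δ
  set A := ∑ j ∈ T, |Δ j| with hAdef
  have hA0 : 0 ≤ A := Finset.sum_nonneg fun _ _ => abs_nonneg _
  have hB0 : 0 ≤ ∑ j ∈ Tᶜ, |Δ j| := Finset.sum_nonneg fun _ _ => abs_nonneg _
  have hsplit : (∑ j, |Δ j|) = A + ∑ j ∈ Tᶜ, |Δ j| :=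
    (Finset.sum_add_sum_compl T _).symm
  have hmax : max (2 * (1 + ξ) * c₀) (2 * ξ * A) ≤ 2 * (1 + ξ) * c₀ + 2 * ξ * A := by
    apply max_le <;> nlinarith
  have h1 : (∑ j, |Δ j|) ≤ 2 * (1 + ξ) * (c₀ + A) := by
    rw [hsplit]; nlinarith [le_trans hcone hmax]
  have hl1 : (∑ j, |Δ j|) ^ 2 ≤ 8 * (1 + ξ) ^ 2 * (c₀ ^ 2 + A ^ 2) := by
    nlinarith [Finset.sum_nonneg (fun j (_ : j ∈ (Finset.univ : Finset (Fin p₀))) => abs_nonneg (Δ j)), sq_nonneg (c₀ - A), sq_nonneg (c₀ + A)]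
  have hcs : A ^ 2 ≤ (T.card : ℝ) * ∑ j ∈ T, Δ j ^ 2 := by
    have := sq_sum_le_card_mul_sum_sq (s := T) (f := fun j => |Δ j|)
    simpa [sq_abs] using this
  have hsub : (∑ j ∈ T, Δ j ^ 2) ≤ ∑ j, Δ j ^ 2 :=
    Finset.sum_le_sum_of_subset_of_nonneg (Finset.subset_univ T)
      (fun _ _ _ => sq_nonneg _)
  have hcard : (T.card : ℝ) ≤ (m : ℝ) := by exact_mod_cast hT
  have hsq0 : 0 ≤ ∑ j ∈ T, Δ j ^ 2 := Finset.sum_nonneg fun _ _ => sq_nonneg _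
  have hsq0' : 0 ≤ ∑ j, Δ j ^ 2 := Finset.sum_nonneg fun _ _ => sq_nonneg _
  have hA2 : A ^ 2 ≤ (m : ℝ) * ∑ j, Δ j ^ 2 := by
    calc A ^ 2 ≤ (T.card : ℝ) * ∑ j ∈ T, Δ j ^ 2 := hcs
      _ ≤ (m : ℝ) * ∑ j, Δ j ^ 2 := by
          apply mul_le_mul hcard hsub hsq0 (by positivity)
  have hc2 : c₀ ^ 2 ≤ lam ^ 2 * s ^ 2 := by nlinarith
  have t1 := mul_le_mul_of_nonneg_left hl1 hζ.le
  have t2 := mul_le_mul_of_nonneg_left hA2 (by positivity : (0:ℝ) ≤ ζ * 8 * (1+ξ)^2)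
  have t3 := mul_le_mul_of_nonneg_right hmζ hsq0'
  have t4 := mul_le_mul_of_nonneg_left hc2 (by positivity : (0:ℝ) ≤ ζ * 8 * (1+ξ)^2)
  nlinarith [t1, t2, t3, t4, hRE']
end
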